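/- An arrangement of n lines in the real plane divides the plane into at most (n^2+n+2)/2 connected regions. -/

import Mathlib

/-!
Every sign cell of an arrangement, the set where each affine function `f i` lies on a prescribed
side of its threshold `c i`, is convex, hence lies in a single connected component of the
complement; so there are at most as many components as realized sign patterns. These are counted
by adding the hyperplanes one at a time: a pattern of the first `m` functions extends in both ways
only if its cell crosses the last hyperplane, where it is a pattern of an arrangement in one
dimension less. Pascal's rule then bounds the number of patterns of `m` hyperplanes in dimension
`d` by `∑ k ≤ d, m.choose k`, which for `d = 2` is `(m ^ 2 + m + 2) / 2`.
-/

open Set Function Module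

section SignPatterns

variable {X ι : Type*}

def signCell (f : ι → X → ℝ) (c : ι → ℝ) (σ : ι → Bool) : Set X :=
  ⋂ i, f i ⁻¹' cond (σ i) (Iio (c i)) (Ioi (c i))

def signPatterns (f : ι → X → ℝ) (c : ι → ℝ) : Set (ι → Bool) :=
  {σ | (signCell f c σ).Nonempty}

lemma mem_signCell_decide {f : ι → X → ℝ} {c : ι → ℝ} {x : X} (hx : ∀ i, f i x ≠ c i) :
    x ∈ signCell f c (fun i => decide (f i x < c i)) := by
  refine mem_iInter.2 fun i => ?_
  by_cases h : f i x < c i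
  · simp [h]
  · simpa [h] using lt_of_le_of_ne (not_lt.1 h) (hx i).symm

lemma ne_of_mem_signCell {f : ι → X → ℝ} {c : ι → ℝ} {σ : ι → Bool} {x : X}
    (hx : x ∈ signCell f c σ) (i : ι) : f i x ≠ c i := by
  have hi := mem_iInter.1 hx i
  cases h : σ i <;> simp only [h, cond, mem_preimage, mem_Iio, mem_Ioi] at hi
  exacts [hi.ne', hi.ne]

lemma signCell_subset_signCell_init {m : ℕ} (f : Fin (m + 1) → X → ℝ)
    (c : Fin (m + 1) → ℝ) (σ : Fin (m + 1) → Bool) :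
    signCell f c σ ⊆ signCell (fun i => f i.castSucc) (fun i => c i.castSucc) (Fin.init σ) :=
  fun _ hx => mem_iInter.2 fun i => mem_iInter.1 hx i.castSucc

lemma image_init_signPatterns_subset {m : ℕ} (f : Fin (m + 1) → X → ℝ)
    (c : Fin (m + 1) → ℝ) :
    Fin.init '' signPatterns f c ⊆
      signPatterns (fun i => f i.castSucc) (fun i => c i.castSucc) := by
  rintro _ ⟨σ, ⟨x, hx⟩, rfl⟩
  exact ⟨x, signCell_subset_signCell_init f c σ hx⟩

end SignPatterns

lemma convex_signCell {E ι : Type*} [AddCommGroup E] [Module ℝ E] (f : ι → E →ᵃ[ℝ] ℝ)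
    (c : ι → ℝ) (σ : ι → Bool) : Convex ℝ (signCell (fun i => f i) c σ) :=
  convex_iInter fun i => by
    cases σ i
    exacts [(convex_Ioi _).affine_preimage (f i), (convex_Iio _).affine_preimage (f i)]

section Topology

variable {E ι : Type*} [AddCommGroup E] [Module ℝ E] [TopologicalSpace E]
  [IsTopologicalAddGroup E] [ContinuousSMul ℝ E]

lemma connectedComponents_mk_eq_of_mem_signCell {f : ι → E →ᵃ[ℝ] ℝ} {c : ι → ℝ}
    {σ : ι → Bool} {x y : {x : E // ∀ i, f i x ≠ c i}}
    (hx : (x : E) ∈ signCell (fun i => f i) c σ)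
    (hy : (y : E) ∈ signCell (fun i => f i) c σ) :
    ConnectedComponents.mk x = ConnectedComponents.mk y := by
  have hcell : IsPreconnected (Subtype.val ⁻¹' signCell (fun i => f i) c σ :
      Set {x : E // ∀ i, f i x ≠ c i}) := by
    refine Topology.IsInducing.subtypeVal.isPreconnected_image.1 ?_
    convert (convex_signCell f c σ).isPreconnected
    exact image_preimage_eq_of_subset fun z hz => ⟨⟨z, ne_of_mem_signCell hz⟩, rfl⟩
  exact ConnectedComponents.coe_eq_coe'.2 (hcell.subset_connectedComponent hy hx)

lemma exists_surjective_signPatterns_connectedComponents (f : ι → E →ᵃ[ℝ] ℝ) (c : ι → ℝ) :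
    ∃ g : signPatterns (fun i => f i) c → ConnectedComponents {x : E // ∀ i, f i x ≠ c i},
      Surjective g := by
  refine ⟨fun σ => ConnectedComponents.mk ⟨σ.2.some, ne_of_mem_signCell σ.2.some_mem⟩, ?_⟩
  rintro ⟨x⟩
  have hx := mem_signCell_decide x.2
  exact ⟨⟨_, x, hx⟩, connectedComponents_mk_eq_of_mem_signCell (Nonempty.some_mem _) hx⟩

end Topology

def bothExtensions {m : ℕ} (S : Set (Fin (m + 1) → Bool)) : Set (Fin m → Bool) :=
  {τ | Fin.snoc τ true ∈ S ∧ Fin.snoc τ false ∈ S}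

lemma ncard_le_ncard_image_init_add_ncard_bothExtensions {m : ℕ} (S : Set (Fin (m + 1) → Bool)) :
    S.ncard ≤ (Fin.init '' S).ncard + (bothExtensions S).ncard := by
  classical
  -- `σ ∈ S` is recovered from `Fin.init σ` unless both extensions of `Fin.init σ` lie in `S`
  have hS : S ⊆ (fun τ => Fin.snoc τ (decide (Fin.snoc τ true ∈ S))) '' (Fin.init '' S) ∪
      (fun τ => Fin.snoc τ false) '' bothExtensions S := by
    intro σ hσ
    have hsnoc : Fin.snoc (Fin.init σ) (σ (Fin.last m)) = σ := Fin.snoc_init_self σ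
    cases hlast : σ (Fin.last m) <;> rw [hlast] at hsnoc
    · by_cases htrue : Fin.snoc (Fin.init σ) true ∈ S
      · exact Or.inr ⟨Fin.init σ, ⟨htrue, by rwa [hsnoc]⟩, hsnoc⟩
      · exact Or.inl ⟨Fin.init σ, mem_image_of_mem _ hσ, by simpa [htrue] using hsnoc⟩
    · exact Or.inl ⟨Fin.init σ, mem_image_of_mem _ hσ, by simp [hsnoc, hσ]⟩
  calc S.ncard ≤ _ := ncard_le_ncard hS (toFinite _)
    _ ≤ _ := ncard_union_le _ _
    _ ≤ _ := add_le_add (ncard_image_le (toFinite _)) (ncard_image_le (toFinite _))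

lemma sum_range_choose_succ_eq (m d : ℕ) :
    ∑ k ∈ Finset.range (d + 1), (m + 1).choose k =
      ∑ k ∈ Finset.range (d + 1), m.choose k + ∑ k ∈ Finset.range d, m.choose k := by
  simp only [Finset.sum_range_succ' _ d, Nat.choose_succ_succ', Finset.sum_add_distrib,
    Nat.choose_zero_right]
  ring

section Affine

variable {E : Type*} [AddCommGroup E] [Module ℝ E]

lemma exists_mem_segment_eq {g : E →ᵃ[ℝ] ℝ} {p q : E} {t : ℝ} (hp : g p < t) (hq : t < g q) :
    ∃ z ∈ segment ℝ p q, g z = t := by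
  rw [← mem_image, image_segment, segment_eq_Icc (hp.trans hq).le]
  exact ⟨hp.le, hq.le⟩

lemma exists_mem_signCell_eq_of_mem_bothExtensions {m : ℕ} {f : Fin (m + 1) → E →ᵃ[ℝ] ℝ}
    {c : Fin (m + 1) → ℝ} {τ : Fin m → Bool}
    (hτ : τ ∈ bothExtensions (signPatterns (fun i => f i) c)) :
    ∃ z ∈ signCell (fun i => f i.castSucc) (fun i => c i.castSucc) τ,
      f (Fin.last m) z = c (Fin.last m) := by
  obtain ⟨⟨p, hp⟩, ⟨q, hq⟩⟩ := hτ
  have hpq : segment ℝ p q ⊆ signCell (fun i => f i.castSucc) (fun i => c i.castSucc) τ := by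
    refine (convex_signCell _ _ τ).segment_subset ?_ ?_
    · simpa only [Fin.init_snoc] using signCell_subset_signCell_init _ _ _ hp
    · simpa only [Fin.init_snoc] using signCell_subset_signCell_init _ _ _ hq
  have hp_lt : f (Fin.last m) p < c (Fin.last m) := by
    simpa using mem_iInter.1 hp (Fin.last m)
  have hq_gt : c (Fin.last m) < f (Fin.last m) q := by
    simpa using mem_iInter.1 hq (Fin.last m)
  obtain ⟨z, hz, hzc⟩ := exists_mem_segment_eq hp_lt hq_gt
  exact ⟨z, hpq hz, hzc⟩

lemma exists_affineMap_levelSet_subset_range [FiniteDimensional ℝ E] {g : E →ᵃ[ℝ] ℝ}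
    (hg : g.linear ≠ 0) (z₀ : E) :
    ∃ (K : Submodule ℝ E) (φ : K →ᵃ[ℝ] E),
      finrank ℝ K + 1 = finrank ℝ E ∧ {z | g z = g z₀} ⊆ range φ :=
  ⟨LinearMap.ker g.linear,
    (AffineEquiv.vaddConst ℝ z₀).toAffineMap.comp (LinearMap.ker g.linear).subtype.toAffineMap,
    Module.Dual.finrank_ker_add_one_of_ne_zero hg,
    fun z hz => ⟨⟨z -ᵥ z₀, by
      rw [LinearMap.mem_ker, AffineMap.linearMap_vsub, show g z = g z₀ from hz, vsub_self]⟩,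
      by simp⟩⟩

lemma exists_bothExtensions_subset_signPatterns_comp [FiniteDimensional ℝ E] {m : ℕ}
    {f : Fin (m + 1) → E →ᵃ[ℝ] ℝ} {c : Fin (m + 1) → ℝ} {τ₀ : Fin m → Bool}
    (hτ₀ : τ₀ ∈ bothExtensions (signPatterns (fun i => f i) c)) :
    ∃ (K : Submodule ℝ E) (φ : K →ᵃ[ℝ] E), finrank ℝ K + 1 = finrank ℝ E ∧
      bothExtensions (signPatterns (fun i => f i) c) ⊆
        signPatterns (fun i => (f i.castSucc).comp φ) (fun i => c i.castSucc) := by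
  obtain ⟨z₀, -, hz₀⟩ := exists_mem_signCell_eq_of_mem_bothExtensions hτ₀
  have hg : (f (Fin.last m)).linear ≠ 0 := by
    intro h
    obtain ⟨v, hv⟩ := (f (Fin.last m)).linear_eq_zero_iff_exists_const.1 h
    obtain ⟨p, hp⟩ := hτ₀.1
    have hp_lt := mem_iInter.1 hp (Fin.last m)
    simp only [hv, AffineMap.const_apply] at hz₀ hp_lt
    simp [hz₀] at hp_lt
  obtain ⟨K, φ, hK, hφ⟩ := exists_affineMap_levelSet_subset_range hg z₀
  refine ⟨K, φ, hK, fun τ hτ => ?_⟩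
  obtain ⟨z, hz, hzc⟩ := exists_mem_signCell_eq_of_mem_bothExtensions hτ
  obtain ⟨k, rfl⟩ := hφ (hzc.trans hz₀.symm)
  exact ⟨k, mem_iInter.2 fun i => mem_iInter.1 hz i⟩

theorem ncard_signPatterns_le [FiniteDimensional ℝ E] {m : ℕ} (f : Fin m → E →ᵃ[ℝ] ℝ)
    (c : Fin m → ℝ) :
    (signPatterns (fun i => f i) c).ncard ≤ ∑ k ∈ Finset.range (finrank ℝ E + 1), m.choose k := by
  induction m generalizing E with
  | zero =>
    calc _ ≤ (univ : Set (Fin 0 → Bool)).ncard := ncard_le_ncard (subset_univ _)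
      _ ≤ _ := by simp [Finset.sum_range_succ']
  | succ m ih =>
    set S := signPatterns (fun i => f i) c
    have hinit : (Fin.init '' S).ncard ≤ ∑ k ∈ Finset.range (finrank ℝ E + 1), m.choose k :=
      (ncard_le_ncard (image_init_signPatterns_subset _ c) (toFinite _)).trans (ih _ _)
    have hboth : (bothExtensions S).ncard ≤ ∑ k ∈ Finset.range (finrank ℝ E), m.choose k := by
      rcases (bothExtensions S).eq_empty_or_nonempty with h | ⟨τ₀, hτ₀⟩
      · simp [h]
      obtain ⟨K, φ, hK, hsub⟩ := exists_bothExtensions_subset_signPatterns_comp hτ₀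
      rw [← hK]
      exact (ncard_le_ncard hsub (toFinite _)).trans (ih _ _)
    calc S.ncard ≤ (Fin.init '' S).ncard + (bothExtensions S).ncard :=
          ncard_le_ncard_image_init_add_ncard_bothExtensions S
      _ ≤ _ := add_le_add hinit hboth
      _ = _ := (sum_range_choose_succ_eq m _).symm

end Affine

lemma sum_range_three_choose (n : ℕ) : ∑ k ∈ Finset.range 3, n.choose k = (n ^ 2 + n + 2) / 2 := by
  induction n with
  | zero => simp [Finset.sum_range_succ]
  | succ n ih =>
    rw [sum_range_choose_succ_eq, ih,
      show (n + 1) ^ 2 + (n + 1) + 2 = n ^ 2 + n + 2 + 2 * (n + 1) by ring,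
      Nat.add_mul_div_left _ _ two_pos]
    simp [Finset.sum_range_succ]
    omega

theorem line_arrangement_regions_le_general (n : ℕ) (a b c : Fin n → ℝ) :
    Finite (ConnectedComponents
      {x : ℝ × ℝ // ∀ i, a i * x.1 + b i * x.2 ≠ c i}) ∧
    Nat.card (ConnectedComponents
      {x : ℝ × ℝ // ∀ i, a i * x.1 + b i * x.2 ≠ c i}) ≤ (n ^ 2 + n + 2) / 2 := by
  let f : Fin n → ℝ × ℝ →ᵃ[ℝ] ℝ := fun i =>
    (a i • LinearMap.fst ℝ ℝ ℝ + b i • LinearMap.snd ℝ ℝ ℝ).toAffineMap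
  obtain ⟨g, hg⟩ := exists_surjective_signPatterns_connectedComponents f c
  refine ⟨Finite.of_surjective g hg, ?_⟩
  calc _ ≤ Nat.card (signPatterns (fun i => f i) c) := Nat.card_le_card_of_surjective g hg
    _ = (signPatterns (fun i => f i) c).ncard := Nat.card_coe_set_eq _
    _ ≤ ∑ k ∈ Finset.range (finrank ℝ (ℝ × ℝ) + 1), n.choose k := ncard_signPatterns_le f c
    _ = (n ^ 2 + n + 2) / 2 := by simp [sum_range_three_choose]

/-- `n` lines in the real plane divide it into at most `(n^2+n+2)/2` regions. -/
theorem line_arrangement_regions_le (n : ℕ) (a b c : Fin n → ℝ)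
    (hline : ∀ i, (a i, b i) ≠ (0, 0)) :
    Finite (ConnectedComponents
      {x : ℝ × ℝ // ∀ i, a i * x.1 + b i * x.2 ≠ c i}) ∧
    Nat.card (ConnectedComponents
      {x : ℝ × ℝ // ∀ i, a i * x.1 + b i * x.2 ≠ c i}) ≤ (n ^ 2 + n + 2) / 2 :=
  line_arrangement_regions_le_general n a b c
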